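/- arXiv:2102.04713 — 2 statements merged into one kernel-verified Lean document; each statement's English description precedes it below -/
import Mathlib

section
/- Let L be a unimodular lattice (a free finitely generated ℤ-module with a unimodular symmetric bilinear form) and σ : L → L an isometric involution. Then (1-σ)L = { v ∈ L⁻ | v·L⁻ ⊆ 2ℤ }, where L⁻ = ker(1+σ). -/
/-!
Forward: for `u ∈ L⁻`, `b (x - σ x) u = b x u - b x (σ u) = 2 b x u`.
Backward: `L⁻` is a kernel, so `L ⧸ L⁻` embeds in the free module `L` and is free, hence `L⁻` is
a direct summand. The functional `u ↦ b v u / 2` on `L⁻` therefore extends to `L`, and by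
unimodularity equals `b x` for some `x`. Pairing against `y - σ y ∈ L⁻` gives
`b (x - σ x) y = b v (y - σ y) / 2 = b v y`, so `v = x - σ x`.
-/

theorem LinearMap.exists_retraction_ker_subtype {R M N : Type*} [CommRing R] [IsDomain R]
    [IsPrincipalIdealRing R] [AddCommGroup M] [Module R M] [AddCommGroup N] [Module R N]
    [Module.Free R N] [Module.Finite R N] (f : M →ₗ[R] N) :
    ∃ l : M →ₗ[R] LinearMap.ker f, l ∘ₗ (LinearMap.ker f).subtype = LinearMap.id := by
  have hexact : Function.Exact (LinearMap.ker f).subtype f.rangeRestrict := by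
    rw [LinearMap.exact_iff, LinearMap.ker_rangeRestrict, Submodule.range_subtype]
  have hsection := f.rangeRestrict.exists_rightInverse_of_surjective f.range_rangeRestrict
  exact ((hexact.split_tfae (Submodule.injective_subtype _)
    f.surjective_rangeRestrict).out 0 1).mp hsection

theorem LinearMap.exists_eq_smul_of_forall_dvd {R M : Type*} [CommRing R] [IsDomain R]
    [AddCommGroup M] [Module R M] (φ : M →ₗ[R] R) {a : R} (ha : a ≠ 0)
    (hdvd : ∀ x, a ∣ φ x) : ∃ ψ : M →ₗ[R] R, φ = a • ψ := by
  choose ψ hψ using hdvd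
  refine ⟨{ toFun := ψ, map_add' := fun x y => ?_, map_smul' := fun c x => ?_ }, ?_⟩
  · apply mul_left_cancel₀ ha
    rw [mul_add, ← hψ, ← hψ, ← hψ, map_add]
  · apply mul_left_cancel₀ ha
    rw [RingHom.id_apply, smul_eq_mul, mul_left_comm, ← hψ, ← hψ, map_smul, smul_eq_mul]
  · ext x
    exact hψ x

section Involution

variable {R M : Type*} [CommRing R] [AddCommGroup M] [Module R M]
  {b : M →ₗ[R] M →ₗ[R] R} {σ : M →ₗ[R] M}

theorem mem_ker_one_add_iff {x : M} : x ∈ LinearMap.ker (1 + σ) ↔ σ x = -x := by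
  rw [LinearMap.mem_ker, LinearMap.add_apply, Module.End.one_apply, add_comm,
    add_eq_zero_iff_eq_neg]

theorem isAdjointPair_of_involutive_of_isometry (hinv : ∀ x, σ (σ x) = x)
    (hisom : ∀ x y, b (σ x) (σ y) = b x y) : LinearMap.IsAdjointPair b b σ σ := fun x y => by
  rw [← hisom x (σ y), hinv]

theorem map_sub_self_eq_neg (hinv : ∀ x, σ (σ x) = x) (x : M) : σ (x - σ x) = -(x - σ x) := by
  rw [map_sub, hinv, neg_sub]

theorem apply_sub_map_of_map_eq_neg (hadj : LinearMap.IsAdjointPair b b σ σ) (x : M) {u : M}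
    (hu : σ u = -u) : b (x - σ x) u = 2 * b x u := by
  rw [map_sub, LinearMap.sub_apply, hadj, hu, map_neg]
  ring

theorem exists_eq_sub_map_of_forall_dvd [IsDomain R] [IsPrincipalIdealRing R] [Module.Free R M]
    [Module.Finite R M] (hunimod : Function.Bijective (fun v : M => b v))
    (hinv : ∀ x, σ (σ x) = x) (hadj : LinearMap.IsAdjointPair b b σ σ) (h2 : (2 : R) ≠ 0)
    {v : M} (hv : σ v = -v) (hdvd : ∀ u, σ u = -u → 2 ∣ b v u) :
    ∃ x, v = x - σ x := by
  set N := LinearMap.ker (1 + σ)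
  obtain ⟨ψ, hψ⟩ := (b v ∘ₗ N.subtype).exists_eq_smul_of_forall_dvd h2
    fun u => hdvd u (mem_ker_one_add_iff.mp u.2)
  obtain ⟨l, hl⟩ := (1 + σ).exists_retraction_ker_subtype
  obtain ⟨x, hx⟩ := hunimod.2 (ψ ∘ₗ l)
  have hbx : b x = ψ ∘ₗ l := hx
  refine ⟨x, hunimod.1 (LinearMap.ext fun y => mul_left_cancel₀ h2 ?_)⟩
  have hy : y - σ y ∈ N := mem_ker_one_add_iff.mpr (map_sub_self_eq_neg hinv y)
  have hly : l (y - σ y) = ⟨y - σ y, hy⟩ := congr($hl ⟨y - σ y, hy⟩)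
  calc 2 * b v y = b v (y - σ y) := by
        rw [map_sub, ← hadj, hv, map_neg, LinearMap.neg_apply]; ring
    _ = 2 * ψ ⟨y - σ y, hy⟩ := congr($hψ ⟨y - σ y, hy⟩)
    _ = 2 * b (x - σ x) y := by
      rw [map_sub, LinearMap.sub_apply, hadj, ← map_sub, hbx, LinearMap.comp_apply, hly]

end Involution

theorem stmt_2_general (L : Type*) [AddCommGroup L] [Module ℤ L]
    [Module.Free ℤ L] [Module.Finite ℤ L]
    (b : L →ₗ[ℤ] L →ₗ[ℤ] ℤ)
    (hunimod : Function.Bijective (fun v : L => b v))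
    (σ : L →ₗ[ℤ] L) (hinv : ∀ x, σ (σ x) = x)
    (hisom : ∀ x y, b (σ x) (σ y) = b x y) :
    ∀ v : L, (∃ x, v = x - σ x) ↔ (σ v = -v ∧ ∀ u, σ u = -u → (2 : ℤ) ∣ b v u) := by
  have hadj := isAdjointPair_of_involutive_of_isometry hinv hisom
  intro v
  constructor
  · rintro ⟨x, rfl⟩
    exact ⟨map_sub_self_eq_neg hinv x,
      fun u hu => ⟨b x u, apply_sub_map_of_map_eq_neg hadj x hu⟩⟩
  · rintro ⟨hv, hdvd⟩
    exact exists_eq_sub_map_of_forall_dvd hunimod hinv hadj two_ne_zero hv hdvd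

/-- for a unimodular lattice `L` with an isometric involution `σ`,
`(1-σ)L = { v ∈ ker(1+σ) | v·ker(1+σ) ⊆ 2ℤ }`. -/
theorem stmt_2 (L : Type*) [AddCommGroup L] [Module ℤ L]
    [Module.Free ℤ L] [Module.Finite ℤ L]
    (b : L →ₗ[ℤ] L →ₗ[ℤ] ℤ) (hsymm : ∀ x y, b x y = b y x)
    (hunimod : Function.Bijective (fun v : L => b v))
    (σ : L →ₗ[ℤ] L) (hinv : ∀ x, σ (σ x) = x)
    (hisom : ∀ x y, b (σ x) (σ y) = b x y) :
    ∀ v : L, (∃ x, v = x - σ x) ↔ (σ v = -v ∧ ∀ u, σ u = -u → (2 : ℤ) ∣ b v u) :=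
  stmt_2_general L b hunimod σ hinv hisom
end

section
/- Let L be a D₄ root lattice, e₁,...,e₄ pairwise orthogonal roots, and set e₀ = -(e₁+e₂+e₃+e₄)/2 ∈ L. Then {e₁, e₂, e₃, e₀} is a base of simple roots of L whose Coxeter–Dynkin diagram is of type D₄ (i.e. e₀·eᵢ = 1 for i = 1,2,3, and e₁,e₂,e₃ pairwise orthogonal, and these four roots generate L). -/
/-- The `D₄` lattice: integer vectors with even coordinate sum. -/
def memD4 (x : Fin 4 → ℤ) : Prop := (2 : ℤ) ∣ ∑ i, x i

/-- The `D₄` lattice as a submodule of `ℤ⁴`. -/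
def D4 : Submodule ℤ (Fin 4 → ℤ) where
  carrier := {x | (2 : ℤ) ∣ ∑ i, x i}
  add_mem' := by
    intro a b ha hb
    simpa [Finset.sum_add_distrib] using dvd_add ha hb
  zero_mem' := by simp
  smul_mem' := by
    intro c x hx
    simpa [← Finset.mul_sum] using Dvd.dvd.mul_left hx c

/-- The negative definite form on `D₄`. -/
def formD4 (x y : Fin 4 → ℤ) : ℤ := -(∑ i, x i * y i)

lemma sq4 (p q r t : ℤ) (h : p^2+q^2+r^2+t^2 = 4) :
    (2 ∣ p - q) ∧ (2 ∣ p - r) ∧ (2 ∣ p - t) := by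
  have hp1 : -2 ≤ p ∧ p ≤ 2 := by constructor <;> nlinarith [sq_nonneg q, sq_nonneg r, sq_nonneg t]
  have hq1 : -2 ≤ q ∧ q ≤ 2 := by constructor <;> nlinarith [sq_nonneg p, sq_nonneg r, sq_nonneg t]
  have hr1 : -2 ≤ r ∧ r ≤ 2 := by constructor <;> nlinarith [sq_nonneg p, sq_nonneg q, sq_nonneg t]
  have ht1 : -2 ≤ t ∧ t ≤ 2 := by constructor <;> nlinarith [sq_nonneg p, sq_nonneg q, sq_nonneg r]
  obtain ⟨hp2, hp3⟩ := hp1; obtain ⟨hq2,hq3⟩ := hq1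
  obtain ⟨hr2,hr3⟩ := hr1; obtain ⟨ht2,ht3⟩ := ht1
  interval_cases p <;> interval_cases q <;> interval_cases r <;> interval_cases t <;> omega

lemma par (e f x : Fin 4 → ℤ)
    (he : e 0 * e 0 + e 1 * e 1 + e 2 * e 2 + e 3 * e 3 = 2)
    (hf : f 0 * f 0 + f 1 * f 1 + f 2 * f 2 + f 3 * f 3 = 2)
    (hef : e 0 * f 0 + e 1 * f 1 + e 2 * f 2 + e 3 * f 3 = 0)
    (hx : (2:ℤ) ∣ x 0 + x 1 + x 2 + x 3) :
    (2:ℤ) ∣ (∑ i, e i * x i) - (∑ i, f i * x i) := by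
  have hs : (e 0 + f 0)^2 + (e 1 + f 1)^2 + (e 2 + f 2)^2 + (e 3 + f 3)^2 = 4 := by
    linear_combination he + hf + 2*hef
  obtain ⟨A, hA⟩ := (sq4 _ _ _ _ hs).1
  obtain ⟨B, hB⟩ := (sq4 _ _ _ _ hs).2.1
  obtain ⟨C, hC⟩ := (sq4 _ _ _ _ hs).2.2
  obtain ⟨W, hW⟩ := hx
  refine ⟨(e 0 + f 0)*W - A * x 1 - B * x 2 - C * x 3
    - (f 0 * x 0 + f 1 * x 1 + f 2 * x 2 + f 3 * x 3), ?_⟩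
  simp only [Fin.sum_univ_four]
  linear_combination (e 0 + f 0) * hW - x 1 * hA - x 2 * hB - x 3 * hC

open Matrix in
/-- if `e₁,…,e₄` are pairwise orthogonal roots of `D₄` and
`e₀ = -(e₁+e₂+e₃+e₄)/2` lies in the lattice, then `{e₁,e₂,e₃,e₀}` is a base
of simple roots with Coxeter–Dynkin diagram `D₄`: `e₀² = -2`, `e₀·eᵢ = 1`
for `i = 1,2,3`, the roots `e₁,e₂,e₃` are pairwise orthogonal, and the four
of them generate the lattice. -/
theorem stmt_12 (e1 e2 e3 e4 e0 : Fin 4 → ℤ)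
    (hmem : ∀ e ∈ ({e1, e2, e3, e4} : Set (Fin 4 → ℤ)), memD4 e)
    (hroot : ∀ e ∈ ({e1, e2, e3, e4} : Set (Fin 4 → ℤ)), formD4 e e = -2)
    (horth : formD4 e1 e2 = 0 ∧ formD4 e1 e3 = 0 ∧ formD4 e1 e4 = 0 ∧
      formD4 e2 e3 = 0 ∧ formD4 e2 e4 = 0 ∧ formD4 e3 e4 = 0)
    (hmem0 : memD4 e0)
    (he0 : e1 + e2 + e3 + e4 = -(2 • e0)) :
    formD4 e0 e0 = -2 ∧
    formD4 e0 e1 = 1 ∧ formD4 e0 e2 = 1 ∧ formD4 e0 e3 = 1 ∧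
    formD4 e1 e2 = 0 ∧ formD4 e1 e3 = 0 ∧ formD4 e2 e3 = 0 ∧
    Submodule.span ℤ ({e1, e2, e3, e0} : Set (Fin 4 → ℤ)) = D4 := by
  obtain ⟨h12, h13, h14, h23, h24, h34⟩ := horth
  -- coordinate version of he0
  have hc : ∀ a, e1 a + e2 a + e3 a + e4 a = -(2 * e0 a) := by
    intro a
    have := congrFun he0 a
    simpa using this
  -- flat norm and orthogonality facts
  have f1 : e1 0 * e1 0 + e1 1 * e1 1 + e1 2 * e1 2 + e1 3 * e1 3 = 2 := by
    have h := hroot e1 (by simp); unfold formD4 at h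
    simp only [Fin.sum_univ_four] at h; linarith
  have f2 : e2 0 * e2 0 + e2 1 * e2 1 + e2 2 * e2 2 + e2 3 * e2 3 = 2 := by
    have h := hroot e2 (by simp); unfold formD4 at h
    simp only [Fin.sum_univ_four] at h; linarith
  have f3 : e3 0 * e3 0 + e3 1 * e3 1 + e3 2 * e3 2 + e3 3 * e3 3 = 2 := by
    have h := hroot e3 (by simp); unfold formD4 at h
    simp only [Fin.sum_univ_four] at h; linarith
  have f4 : e4 0 * e4 0 + e4 1 * e4 1 + e4 2 * e4 2 + e4 3 * e4 3 = 2 := by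
    have h := hroot e4 (by simp); unfold formD4 at h
    simp only [Fin.sum_univ_four] at h; linarith
  have g12 : e1 0 * e2 0 + e1 1 * e2 1 + e1 2 * e2 2 + e1 3 * e2 3 = 0 := by
    have h := h12; unfold formD4 at h; simp only [Fin.sum_univ_four] at h; linarith
  have g13 : e1 0 * e3 0 + e1 1 * e3 1 + e1 2 * e3 2 + e1 3 * e3 3 = 0 := by
    have h := h13; unfold formD4 at h; simp only [Fin.sum_univ_four] at h; linarith
  have g14 : e1 0 * e4 0 + e1 1 * e4 1 + e1 2 * e4 2 + e1 3 * e4 3 = 0 := by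
    have h := h14; unfold formD4 at h; simp only [Fin.sum_univ_four] at h; linarith
  have g23 : e2 0 * e3 0 + e2 1 * e3 1 + e2 2 * e3 2 + e2 3 * e3 3 = 0 := by
    have h := h23; unfold formD4 at h; simp only [Fin.sum_univ_four] at h; linarith
  have g24 : e2 0 * e4 0 + e2 1 * e4 1 + e2 2 * e4 2 + e2 3 * e4 3 = 0 := by
    have h := h24; unfold formD4 at h; simp only [Fin.sum_univ_four] at h; linarith
  have g34 : e3 0 * e4 0 + e3 1 * e4 1 + e3 2 * e4 2 + e3 3 * e4 3 = 0 := by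
    have h := h34; unfold formD4 at h; simp only [Fin.sum_univ_four] at h; linarith
  -- the four form values involving e0
  have S00 : 4 * (e0 0 * e0 0 + e0 1 * e0 1 + e0 2 * e0 2 + e0 3 * e0 3) = 8 := by
    linear_combination (2*e0 0 - e1 0 - e2 0 - e3 0 - e4 0) * hc 0
      + (2*e0 1 - e1 1 - e2 1 - e3 1 - e4 1) * hc 1
      + (2*e0 2 - e1 2 - e2 2 - e3 2 - e4 2) * hc 2
      + (2*e0 3 - e1 3 - e2 3 - e3 3 - e4 3) * hc 3
      + f1 + f2 + f3 + f4 + 2*g12 + 2*g13 + 2*g14 + 2*g23 + 2*g24 + 2*g34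
  have S01 : -2 * (e0 0 * e1 0 + e0 1 * e1 1 + e0 2 * e1 2 + e0 3 * e1 3) = 2 := by
    linear_combination (-(e1 0)) * hc 0 - e1 1 * hc 1 - e1 2 * hc 2 - e1 3 * hc 3
      + f1 + g12 + g13 + g14
  have S02 : -2 * (e0 0 * e2 0 + e0 1 * e2 1 + e0 2 * e2 2 + e0 3 * e2 3) = 2 := by
    linear_combination (-(e2 0)) * hc 0 - e2 1 * hc 1 - e2 2 * hc 2 - e2 3 * hc 3
      + f2 + g12 + g23 + g24
  have S03 : -2 * (e0 0 * e3 0 + e0 1 * e3 1 + e0 2 * e3 2 + e0 3 * e3 3) = 2 := by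
    linear_combination (-(e3 0)) * hc 0 - e3 1 * hc 1 - e3 2 * hc 2 - e3 3 * hc 3
      + f3 + g13 + g23 + g34
  refine ⟨?_, ?_, ?_, ?_, h12, h13, h23, ?_⟩
  · unfold formD4; rw [Fin.sum_univ_four]; linarith
  · unfold formD4; rw [Fin.sum_univ_four]; linarith
  · unfold formD4; rw [Fin.sum_univ_four]; linarith
  · unfold formD4; rw [Fin.sum_univ_four]; linarith
  -- the span statement
  have hspan_le : Submodule.span ℤ ({e1, e2, e3, e0} : Set (Fin 4 → ℤ)) ≤ D4 := by
    rw [Submodule.span_le]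
    intro v hv
    simp only [Set.mem_insert_iff, Set.mem_singleton_iff] at hv
    rcases hv with rfl | rfl | rfl | rfl
    · exact hmem _ (by simp)
    · exact hmem _ (by simp)
    · exact hmem _ (by simp)
    · exact hmem0
  -- the Gram matrix identity  E * Eᵀ = 2 • 1
  set M : Matrix (Fin 4) (Fin 4) ℤ := Matrix.of ![e1, e2, e3, e4] with hM
  have hE1 : M * Mᵀ = (2:ℤ) • 1 := by
    ext i j
    fin_cases i <;> fin_cases j <;>
      simp only [hM, Matrix.mul_apply, Matrix.transpose_apply, Matrix.of_apply,
        Fin.sum_univ_four, Matrix.smul_apply, Matrix.one_apply, smul_eq_mul,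
        Matrix.cons_val_zero, Matrix.cons_val_one, Matrix.head_cons,
        Matrix.cons_val_two, Matrix.tail_cons, Matrix.cons_val_three,
        Matrix.head_fin_const, Fin.isValue] <;>
      norm_num [Fin.ext_iff] <;>
      first
        | linear_combination f1 | linear_combination f2 | linear_combination f3
        | linear_combination f4 | linear_combination g12 | linear_combination g13
        | linear_combination g14 | linear_combination g23 | linear_combination g24
        | linear_combination g34
  have hdet : Mᵀ.det ≠ 0 := by
    intro h0
    have h16 : M.det * Mᵀ.det = 16 := by
      rw [← Matrix.det_mul, hE1, Matrix.det_smul, Matrix.det_one]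
      norm_num
    rw [h0, mul_zero] at h16
    norm_num at h16
  have hE2 : Mᵀ * M = (2:ℤ) • 1 := by
    have hz : (Mᵀ * M - (2:ℤ) • 1) * Mᵀ = 0 := by
      rw [Matrix.sub_mul, Matrix.mul_assoc, hE1, Matrix.mul_smul, Matrix.smul_mul,
        Matrix.mul_one, Matrix.one_mul, sub_self]
    have hz2 : (Mᵀ * M - (2:ℤ) • 1) * (Mᵀ * Mᵀ.adjugate) = 0 := by
      rw [← Matrix.mul_assoc, hz, Matrix.zero_mul]
    rw [Matrix.mul_adjugate] at hz2
    have hz3 : Mᵀ.det • (Mᵀ * M - (2:ℤ) • 1) = 0 := by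
      rw [← hz2]
      rw [Matrix.mul_smul, Matrix.mul_one]
    rcases smul_eq_zero.mp hz3 with h | h
    · exact absurd h hdet
    · exact sub_eq_zero.mp h
  -- reconstruction of an arbitrary vector from its dot products
  have hx2 : ∀ x : Fin 4 → ℤ, ∀ a, 2 * x a =
      e1 a * (∑ i, e1 i * x i) + e2 a * (∑ i, e2 i * x i)
      + e3 a * (∑ i, e3 i * x i) + e4 a * (∑ i, e4 i * x i) := by
    intro x a
    have h0 : (Mᵀ * M) *ᵥ x = (2:ℤ) • x := by
      rw [hE2, Matrix.smul_mulVec, Matrix.one_mulVec]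
    have h := congrFun h0 a
    simp only [hM, Matrix.mulVec, dotProduct, Matrix.mul_apply,
      Matrix.transpose_apply, Matrix.of_apply, Fin.sum_univ_four,
      Matrix.cons_val_zero, Matrix.cons_val_one, Matrix.head_cons,
      Matrix.cons_val_two, Matrix.tail_cons, Matrix.cons_val_three,
      Pi.smul_apply, smul_eq_mul] at h
    simp only [Fin.sum_univ_four]
    linear_combination -h
  refine le_antisymm hspan_le ?_
  intro x hx
  have hxs : (2:ℤ) ∣ x 0 + x 1 + x 2 + x 3 := by
    have h : (2:ℤ) ∣ ∑ i, x i := hx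
    simpa [Fin.sum_univ_four] using h
  obtain ⟨k1, hk1⟩ := par e1 e4 x f1 f4 g14 hxs
  obtain ⟨k2, hk2⟩ := par e2 e4 x f2 f4 g24 hxs
  obtain ⟨k3, hk3⟩ := par e3 e4 x f3 f4 g34 hxs
  have hxeq : x = k1 • e1 + k2 • e2 + k3 • e3 + (-(∑ i, e4 i * x i)) • e0 := by
    funext a
    simp only [Pi.add_apply, Pi.smul_apply, smul_eq_mul]
    refine mul_left_cancel₀ (two_ne_zero) ?_
    linear_combination hx2 x a + e1 a * hk1 + e2 a * hk2 + e3 a * hk3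
      + (∑ i, e4 i * x i) * hc a
  rw [hxeq]
  have m1 : e1 ∈ Submodule.span ℤ ({e1, e2, e3, e0} : Set (Fin 4 → ℤ)) :=
    Submodule.subset_span (by simp)
  have m2 : e2 ∈ Submodule.span ℤ ({e1, e2, e3, e0} : Set (Fin 4 → ℤ)) :=
    Submodule.subset_span (by simp)
  have m3 : e3 ∈ Submodule.span ℤ ({e1, e2, e3, e0} : Set (Fin 4 → ℤ)) :=
    Submodule.subset_span (by simp)
  have m0 : e0 ∈ Submodule.span ℤ ({e1, e2, e3, e0} : Set (Fin 4 → ℤ)) :=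
    Submodule.subset_span (by simp)
  exact add_mem (add_mem (add_mem (Submodule.smul_mem _ _ m1) (Submodule.smul_mem _ _ m2))
    (Submodule.smul_mem _ _ m3)) (Submodule.smul_mem _ _ m0)
end
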